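/- For all α ≥ 1 and M ≥ 1 there is a constant C, depending only on α and M, such that the following holds. Let L ≥ 1 and n ≥ 1 be integers, let ψ be a twice continuously differentiable real-valued function on [0, (2n+1)/L] with |ψ''(x)| ≤ M for all x in this interval, set λ_k := ψ(k/L) for 0 ≤ k ≤ 2n, and assume |λ_k − λ_m| ≥ |k² − m²|/(αL²) for all 0 ≤ k ≠ m ≤ 2n. Then |Σ_{k=0}^{n−1} (1/(λ_k − λ_n) + 1/(λ_{2n−k} − λ_n))| ≤ C·L²/n. -/

import Mathlib

/-!
Write `a = λ_k - λ_n` and `b = λ_{2n-k} - λ_n`, so that `1/a + 1/b = (a + b)/(a b)`. The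
numerator is the second difference of `ψ` at `n/L` with step `(n - k)/L`, of size
`O(M (n - k)²/L²)`, while the spacing bound gives `|a|, |b| ≳ n (n - k)/(α L²)`. The factors
`(n - k)²` cancel, so each symmetrized term is `O(α² M L²/n²)`, and there are `n` of them.
-/

open Finset

theorem abs_one_div_add_one_div_le {a b A B E : ℝ} (hA : 0 < A) (hB : 0 < B)
    (ha : A ≤ |a|) (hb : B ≤ |b|) (hab : |a + b| ≤ E) : |1 / a + 1 / b| ≤ E / (A * B) := by
  have ha0 : a ≠ 0 := abs_pos.mp (hA.trans_le ha)
  have hb0 : b ≠ 0 := abs_pos.mp (hB.trans_le hb)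
  rw [div_add_div _ _ ha0 hb0, one_mul, mul_one, add_comm b, abs_div, abs_mul]
  exact div_le_div₀ ((abs_nonneg _).trans hab) hab (by positivity)
    (mul_le_mul ha hb hB.le (abs_nonneg a))

theorem abs_add_sub_two_mul_le_of_hasDerivWithinAt {ψ ψ' ψ'' : ℝ → ℝ} {s : Set ℝ}
    {M x h : ℝ} (hs : Convex ℝ s) (hψ : ∀ y ∈ s, HasDerivWithinAt ψ (ψ' y) s y)
    (hψ' : ∀ y ∈ s, HasDerivWithinAt ψ' (ψ'' y) s y) (hψ'' : ∀ y ∈ s, |ψ'' y| ≤ M)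
    (hh : 0 ≤ h) (hl : x - h ∈ s) (hr : x + h ∈ s) :
    |ψ (x + h) + ψ (x - h) - 2 * ψ x| ≤ 2 * M * h ^ 2 := by
  have hmem : ∀ t ∈ Set.Icc 0 h, x + t ∈ s ∧ x - t ∈ s := fun t ⟨ht0, hth⟩ =>
    ⟨hs.ordConnected.out hl hr ⟨by linarith, by linarith⟩,
      hs.ordConnected.out hl hr ⟨by linarith, by linarith⟩⟩
  have hg : ∀ t ∈ Set.Icc 0 h, HasDerivWithinAt (fun t => ψ (x + t) + ψ (x - t))
      (ψ' (x + t) - ψ' (x - t)) (Set.Icc 0 h) t := by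
    intro t ht
    have hplus := (hψ _ (hmem t ht).1).comp t ((hasDerivWithinAt_id t _).const_add x)
      fun u hu => (hmem u hu).1
    have hminus := (hψ _ (hmem t ht).2).comp t ((hasDerivWithinAt_id t _).const_sub x)
      fun u hu => (hmem u hu).2
    exact (hplus.add hminus).congr_deriv (by simp [sub_eq_add_neg])
  -- `ψ'` is `M`-Lipschitz on `s`, and `x ± t` are `2t ≤ 2h` apart.
  have hg' : ∀ t ∈ Set.Icc 0 h, ‖ψ' (x + t) - ψ' (x - t)‖ ≤ 2 * M * h := by
    intro t ht
    have hlip := hs.norm_image_sub_le_of_norm_hasDerivWithin_le hψ' hψ'' (hmem t ht).2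
      (hmem t ht).1
    have hM : 0 ≤ M := (abs_nonneg _).trans (hψ'' _ hr)
    simp only [Real.norm_eq_abs, add_sub_sub_cancel,
      abs_of_nonneg (by linarith [ht.1] : 0 ≤ t + t)] at hlip ⊢
    nlinarith [ht.2]
  have := (convex_Icc 0 h).norm_image_sub_le_of_norm_hasDerivWithin_le hg hg'
    (Set.left_mem_Icc.2 hh) (Set.right_mem_Icc.2 hh)
  simp only [Real.norm_eq_abs, add_zero, sub_zero, abs_of_nonneg hh, ← two_mul] at this
  linarith [show 2 * M * h * h = 2 * M * h ^ 2 by ring]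

theorem abs_symmetrized_term_le {ψ ψ' ψ'' : ℝ → ℝ} {s : Set ℝ} {α M L : ℝ} {n k : ℕ}
    (hα : 0 < α) (hL : 0 < L) (hkn : k < n) (hs : Convex ℝ s) (hs₀ : 0 ∈ s)
    (hs₁ : 2 * n / L ∈ s) (hψ : ∀ y ∈ s, HasDerivWithinAt ψ (ψ' y) s y)
    (hψ' : ∀ y ∈ s, HasDerivWithinAt ψ' (ψ'' y) s y) (hψ'' : ∀ y ∈ s, |ψ'' y| ≤ M)
    (hsp : ∀ m : ℕ, m ≤ 2 * n → m ≠ n →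
      |(m : ℝ) ^ 2 - (n : ℝ) ^ 2| / (α * L ^ 2) ≤ |ψ (m / L) - ψ (n / L)|) :
    |1 / (ψ (k / L) - ψ (n / L)) + 1 / (ψ (((2 * n - k : ℕ) : ℝ) / L) - ψ (n / L))| ≤
      α ^ 2 * M * L ^ 2 / n ^ 2 := by
  have hk : (k : ℝ) < n := by exact_mod_cast hkn
  have hk₀ : (0 : ℝ) ≤ k := k.cast_nonneg
  have hnk : (0 : ℝ) < n - k := by linarith
  have hreflect : ((2 * n - k : ℕ) : ℝ) = 2 * n - k := by
    push_cast [Nat.cast_sub (by omega : k ≤ 2 * n)]; ring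
  have hmem : ∀ y, 0 ≤ y → y ≤ 2 * n / L → y ∈ s := fun y h₀ h₁ =>
    hs.ordConnected.out hs₀ hs₁ ⟨h₀, h₁⟩
  have hsecond := abs_add_sub_two_mul_le_of_hasDerivWithinAt (x := n / L) (h := (n - k) / L)
    hs hψ hψ' hψ'' (div_nonneg (by linarith) hL.le)
    (hmem _ (by rw [← sub_div]; exact div_nonneg (by linarith) hL.le)
      (by rw [← sub_div]; gcongr; linarith))
    (hmem _ (by positivity) (by rw [← add_div]; gcongr; linarith))
  rw [← sub_div, ← add_div, sub_sub_cancel, show (n : ℝ) + (n - k) = 2 * n - k by ring]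
    at hsecond
  have hlow : ∀ m : ℕ, m ≤ 2 * n → m ≠ n → ∀ c : ℝ, c ≤ |(m : ℝ) ^ 2 - (n : ℝ) ^ 2| →
      c / (α * L ^ 2) ≤ |ψ (m / L) - ψ (n / L)| := fun m hm hmn c hc =>
    (div_le_div_of_nonneg_right hc (by positivity)).trans (hsp m hm hmn)
  have ha := hlow k (by omega) hkn.ne ((n - k) * n) (by
    rw [abs_of_nonpos (by nlinarith)]; nlinarith)
  have hb := hlow (2 * n - k) (by omega) (by omega) ((n - k) * (2 * n)) (by
    rw [hreflect, abs_of_nonneg (by nlinarith)]; nlinarith)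
  rw [hreflect] at hb ⊢
  have hnum : |ψ (k / L) - ψ (n / L) + (ψ ((2 * n - k) / L) - ψ (n / L))| ≤
      2 * M * ((n - k) / L) ^ 2 := by
    rw [show ψ (k / L) - ψ (n / L) + (ψ ((2 * n - k) / L) - ψ (n / L)) =
      ψ ((2 * n - k) / L) + ψ (k / L) - 2 * ψ (n / L) by ring]
    exact hsecond
  calc _ ≤ 2 * M * ((n - k) / L) ^ 2 /
        ((n - k) * n / (α * L ^ 2) * ((n - k) * (2 * n) / (α * L ^ 2))) :=
        abs_one_div_add_one_div_le (div_pos (mul_pos hnk (by linarith)) (by positivity))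
          (div_pos (mul_pos hnk (by linarith)) (by positivity)) ha hb hnum
    _ = α ^ 2 * M * L ^ 2 / n ^ 2 := by field_simp

/-- Symmetrization estimate (equations (7.34)–(7.37)) in the proof of Lemma 5.1:
if `λ_k = ψ(k/L)` with `ψ` twice continuously differentiable, `|ψ''| ≤ M`, and the
eigenvalues satisfy an `|k² − m²|/(αL²)` lower spacing bound, then the symmetrized
sum of reciprocals around the index `n` is at most `C L²/n`. -/
theorem stmt6 (α M : ℝ) (hα : 1 ≤ α) (hM : 1 ≤ M) :
    ∃ C : ℝ, 0 < C ∧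
    ∀ (L n : ℕ) (ψ ψ' ψ'' : ℝ → ℝ),
      1 ≤ L → 1 ≤ n →
      (∀ x ∈ Set.Icc (0 : ℝ) ((2 * (n : ℝ) + 1) / (L : ℝ)),
        HasDerivWithinAt ψ (ψ' x) (Set.Icc (0 : ℝ) ((2 * (n : ℝ) + 1) / (L : ℝ))) x) →
      (∀ x ∈ Set.Icc (0 : ℝ) ((2 * (n : ℝ) + 1) / (L : ℝ)),
        HasDerivWithinAt ψ' (ψ'' x) (Set.Icc (0 : ℝ) ((2 * (n : ℝ) + 1) / (L : ℝ))) x) →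
      ContinuousOn ψ'' (Set.Icc (0 : ℝ) ((2 * (n : ℝ) + 1) / (L : ℝ))) →
      (∀ x ∈ Set.Icc (0 : ℝ) ((2 * (n : ℝ) + 1) / (L : ℝ)), |ψ'' x| ≤ M) →
      (∀ k m : ℕ, k ≤ 2 * n → m ≤ 2 * n → k ≠ m →
        |(k : ℝ) ^ 2 - (m : ℝ) ^ 2| / (α * (L : ℝ) ^ 2) ≤
          |ψ ((k : ℝ) / (L : ℝ)) - ψ ((m : ℝ) / (L : ℝ))|) →
      |∑ k ∈ Finset.range n,
          (1 / (ψ ((k : ℝ) / (L : ℝ)) - ψ ((n : ℝ) / (L : ℝ))) +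
           1 / (ψ (((2 * n - k : ℕ) : ℝ) / (L : ℝ)) - ψ ((n : ℝ) / (L : ℝ))))| ≤
        C * (L : ℝ) ^ 2 / (n : ℝ) := by
  refine ⟨α ^ 2 * M, by positivity, fun L n ψ ψ' ψ'' hL _ hψ hψ' _ hψ'' hsp => ?_⟩
  have hL₀ : (0 : ℝ) < L := by exact_mod_cast hL
  have hterm : ∀ k ∈ range n, |1 / (ψ (k / L) - ψ (n / L)) +
      1 / (ψ (((2 * n - k : ℕ) : ℝ) / L) - ψ (n / L))| ≤ α ^ 2 * M * L ^ 2 / n ^ 2 :=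
    fun k hk => abs_symmetrized_term_le (by linarith) hL₀ (mem_range.mp hk) (convex_Icc _ _)
      ⟨le_rfl, by positivity⟩ ⟨by positivity, by gcongr; linarith⟩ hψ hψ' hψ''
      fun m hm hmn => hsp m n hm (by omega) hmn
  calc _ ≤ ∑ k ∈ range n, |1 / (ψ (k / L) - ψ (n / L)) +
        1 / (ψ (((2 * n - k : ℕ) : ℝ) / L) - ψ (n / L))| := abs_sum_le_sum_abs _ _
    _ ≤ n • (α ^ 2 * M * L ^ 2 / n ^ 2) := by simpa using sum_le_card_nsmul _ _ _ hterm
    _ = α ^ 2 * M * L ^ 2 / n := by rw [nsmul_eq_mul]; field_simp
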